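/- Let (X_i, Y_i), i = 1, ..., n+1 be exchangeable random pairs, and let Λ_i be real-valued conformity scores satisfying Λ_i = s(X_i, Y_i) for a fixed measurable function s. If the Λ_i are almost surely distinct, then the probability that Λ_{n+1} is at most the ⌈(1-α)(n+1)⌉-th smallest value among Λ_1, ..., Λ_n (with the convention that this equals +∞ if ⌈(1-α)(n+1)⌉ > n) is at least 1 - α and at most 1 - α + 1/(n+1). -/

import Mathlib

open MeasureTheory Finset
open scoped ENNReal

/-- rank of index `j` among the values of `v`. -/
private noncomputable def rnk {N : ℕ} (j : Fin N) (v : Fin N → ℝ) : ℕ :=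
  (Finset.univ.filter fun i => v i ≤ v j).card

private lemma rnk_ge_one {N : ℕ} (j : Fin N) (v : Fin N → ℝ) : 1 ≤ rnk j v :=
  Finset.card_pos.mpr ⟨j, by simp [rnk]⟩

private lemma rnk_le {N : ℕ} (j : Fin N) (v : Fin N → ℝ) : rnk j v ≤ N :=
  (Finset.card_filter_le _ _).trans (by simp)

private lemma rnk_inj {N : ℕ} (v : Fin N → ℝ) (hv : Function.Injective v)
    {j j' : Fin N} (h : rnk j v = rnk j' v) : j = j' := by
  by_contra hne
  have hvne : v j ≠ v j' := fun e => hne (hv e)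
  have key : ∀ a b : Fin N, v a < v b → rnk a v < rnk b v := by
    intro a b hab
    apply Finset.card_lt_card
    have hsub : (Finset.univ.filter fun i => v i ≤ v a) ⊆ Finset.univ.filter fun i => v i ≤ v b := by
      intro i hi; simp only [Finset.mem_filter, Finset.mem_univ, true_and] at hi ⊢
      exact hi.trans hab.le
    rw [Finset.ssubset_iff_of_subset hsub]
    exact ⟨b, by simp, by simp [not_le.mpr hab]⟩
  rcases lt_or_gt_of_ne hvne with h1 | h1
  · exact absurd h (ne_of_lt (key _ _ h1))
  · exact absurd h.symm (ne_of_lt (key _ _ h1))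

private lemma rnk_surj {N : ℕ} (v : Fin N → ℝ) (hv : Function.Injective v)
    {m : ℕ} (hm1 : 1 ≤ m) (hm2 : m ≤ N) : ∃ j, rnk j v = m := by
  classical
  have himg : (Finset.univ.image fun j => rnk j v) = Finset.Icc 1 N := by
    apply Finset.eq_of_subset_of_card_le
    · intro x hx
      simp only [Finset.mem_image, Finset.mem_univ, true_and] at hx
      obtain ⟨j, rfl⟩ := hx
      exact Finset.mem_Icc.mpr ⟨rnk_ge_one j v, rnk_le j v⟩
    · rw [Nat.card_Icc, Finset.card_image_of_injective _ (fun j j' h => rnk_inj v hv h)]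
      simp
  have : m ∈ Finset.univ.image fun j => rnk j v := himg ▸ Finset.mem_Icc.mpr ⟨hm1, hm2⟩
  simpa using this

private lemma rnk_perm {N : ℕ} (σ : Equiv.Perm (Fin N)) (j : Fin N) (v : Fin N → ℝ) :
    rnk j (v ∘ σ) = rnk (σ j) v := by
  unfold rnk
  rw [Finset.card_filter, Finset.card_filter]
  exact Fintype.sum_equiv σ _ _ (fun i => rfl)

private lemma rnk_measurable {N : ℕ} (j : Fin N) : Measurable fun v : Fin N → ℝ => rnk j v := by
  have h : (fun v : Fin N → ℝ => rnk j v) = fun v => ∑ i, if v i ≤ v j then 1 else 0 := by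
    funext v; exact Finset.card_filter _ _
  rw [h]
  exact Finset.measurable_sum _ fun i _ =>
    Measurable.ite (measurableSet_le (measurable_pi_apply i) (measurable_pi_apply j))
      measurable_const measurable_const

private lemma sorted_le_get_iff {l : List EReal} (hl : l.Pairwise (· ≤ ·)) {m : ℕ}
    (hm : m < l.length) (b : EReal) :
    b ≤ l.get ⟨m, hm⟩ ↔ l.countP (fun x => decide (x < b)) ≤ m := by
  induction l generalizing m with
  | nil => simp at hm
  | cons x t ih =>
    rw [List.pairwise_cons] at hl
    obtain ⟨hx, ht⟩ := hl
    cases m with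
    | zero =>
      simp only [List.get_cons_zero, Nat.le_zero, List.countP_eq_zero]
      constructor
      · intro hbx y hy
        simp only [decide_eq_true_eq]
        rcases List.mem_cons.mp hy with rfl | hy
        · exact not_lt.mpr hbx
        · exact not_lt.mpr (hbx.trans (hx y hy))
      · intro h
        have := h x List.mem_cons_self
        simpa using this
    | succ m =>
      have hm' : m < t.length := by simpa using hm
      rw [show (x :: t).get ⟨m + 1, hm⟩ = t.get ⟨m, hm'⟩ from rfl, ih ht hm', List.countP_cons]
      by_cases hxb : x < b
      · simp [hxb]
      · have hbx : b ≤ x := not_lt.mp hxb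
        have hct : t.countP (fun y => decide (y < b)) = 0 := List.countP_eq_zero.mpr (by
          intro y hy; simp only [decide_eq_true_eq]; exact not_lt.mpr (hbx.trans (hx y hy)))
        rw [hct, if_neg (by simpa using hxb)]
        omega

private lemma rank_le_iff {n : ℕ} (hn : 0 < n) (v : Fin (n + 1) → ℝ)
    (hv : Function.Injective v) {k : ℕ} (hk1 : 1 ≤ k) (hkn : k ≤ n) :
    ((v (Fin.last n) : EReal) ≤
      ((Multiset.map (fun i : Fin n => (v i.castSucc : EReal))
          (Finset.univ : Finset (Fin n)).val).sort (· ≤ ·)).getD (k - 1) ⊤)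
      ↔ rnk (Fin.last n) v ≤ k := by
  classical
  set M := Multiset.map (fun i : Fin n => (v i.castSucc : EReal))
    (Finset.univ : Finset (Fin n)).val with hM
  set l := M.sort (· ≤ ·) with hl
  have hlen : l.length = n := by
    rw [hl, Multiset.length_sort, hM, Multiset.card_map]; simp
  have hidx : k - 1 < l.length := by omega
  rw [show l.getD (k - 1) ⊤ = l.get ⟨k - 1, hidx⟩ from List.getD_eq_get (l := l) (d := ⊤) ⟨k - 1, hidx⟩,
    sorted_le_get_iff (Multiset.pairwise_sort _ _) hidx]
  have hcount : l.countP (fun x => decide (x < (v (Fin.last n) : EReal))) =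
      (Finset.univ.filter fun i : Fin n => v i.castSucc < v (Fin.last n)).card := by
    have h1 := Multiset.coe_countP (fun x : EReal => x < (v (Fin.last n) : EReal)) l
    rw [hl, Multiset.sort_eq, hM, Multiset.countP_map] at h1
    rw [← h1]
    rw [show (Finset.univ.filter fun i : Fin n => v i.castSucc < v (Fin.last n)).card
        = Multiset.card ((Finset.univ : Finset (Fin n)).val.filter
            fun i : Fin n => v i.castSucc < v (Fin.last n)) from rfl]
    congr 1
    apply Multiset.filter_congr
    intro i _
    simp [EReal.coe_lt_coe_iff]
  have hr : rnk (Fin.last n) v =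
      (Finset.univ.filter fun i : Fin n => v i.castSucc < v (Fin.last n)).card + 1 := by
    rw [rnk, Finset.card_filter, Fin.sum_univ_castSucc, Finset.card_filter]
    simp only [le_refl, if_pos]
    congr 1
    apply Finset.sum_congr rfl
    intro i _
    have hne : v i.castSucc ≠ v (Fin.last n) := fun h => absurd (hv h) (Fin.castSucc_lt_last i).ne
    by_cases hlt : v i.castSucc < v (Fin.last n)
    · rw [if_pos hlt.le, if_pos hlt]
    · rw [if_neg hlt, if_neg fun hle => hlt (lt_of_le_of_ne hle hne)]
  rw [hcount, hr]
  omega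

/-- Conformal calibration coverage (CQR, generalized Theorem 1 of Romano et al.).
Let `(X i, Y i)`, `i = 0, ..., n`, be exchangeable random pairs and
`Λ i = s (X i) (Y i)` conformity scores for a fixed measurable `s`, a.s. distinct.
Let `q̂` be the `⌈(1-α)(n+1)⌉`-th smallest value among the first `n` scores
(`+∞` if `⌈(1-α)(n+1)⌉ > n`). Then `1 - α ≤ P(Λ (n+1) ≤ q̂) ≤ 1 - α + 1/(n+1)`. -/
theorem conformal_coverage {Ω 𝒳 : Type*} [MeasurableSpace Ω] [MeasurableSpace 𝒳]
    (ℙ : Measure Ω) [IsProbabilityMeasure ℙ] (n : ℕ) (hn : 0 < n)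
    (X : Fin (n + 1) → Ω → 𝒳) (Y : Fin (n + 1) → Ω → ℝ)
    (hXmeas : ∀ i, Measurable (X i)) (hYmeas : ∀ i, Measurable (Y i))
    (s : 𝒳 → ℝ → ℝ) (hs : Measurable fun p : 𝒳 × ℝ => s p.1 p.2)
    (hexch : ∀ σ : Equiv.Perm (Fin (n + 1)),
      Measure.map (fun ω i => (X (σ i) ω, Y (σ i) ω)) ℙ =
        Measure.map (fun ω i => (X i ω, Y i ω)) ℙ)
    (hdistinct : ∀ᵐ ω ∂ℙ, Function.Injective fun i => s (X i ω) (Y i ω))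
    (α : ℝ) (hα0 : 0 < α) (hα1 : α < 1) (hαn : 1 / (n + 1) ≤ α) :
    1 - α ≤
      (ℙ {ω | (s (X (Fin.last n) ω) (Y (Fin.last n) ω) : EReal) ≤
        ((Multiset.map (fun i : Fin n => (s (X i.castSucc ω) (Y i.castSucc ω) : EReal))
            (Finset.univ : Finset (Fin n)).val).sort (· ≤ ·)).getD
          (⌈(1 - α) * (n + 1)⌉₊ - 1) ⊤}).toReal ∧
    (ℙ {ω | (s (X (Fin.last n) ω) (Y (Fin.last n) ω) : EReal) ≤
        ((Multiset.map (fun i : Fin n => (s (X i.castSucc ω) (Y i.castSucc ω) : EReal))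
            (Finset.univ : Finset (Fin n)).val).sort (· ≤ ·)).getD
          (⌈(1 - α) * (n + 1)⌉₊ - 1) ⊤}).toReal ≤ 1 - α + 1 / (n + 1) := by
  classical
  have hnk : (0:ℝ) < (n:ℝ) + 1 := by positivity
  have hα1' : (0:ℝ) < 1 - α := by linarith
  have h1αn : (1:ℝ) ≤ α * ((n:ℝ) + 1) := by
    have := (div_le_iff₀ hnk).mp hαn
    linarith
  have hk1 : 1 ≤ ⌈(1 - α) * ((n:ℝ) + 1)⌉₊ :=
    Nat.ceil_pos.mpr (by positivity)
  have hkn : ⌈(1 - α) * ((n:ℝ) + 1)⌉₊ ≤ n := by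
    apply Nat.ceil_le.mpr
    nlinarith
  set k := ⌈(1 - α) * ((n:ℝ) + 1)⌉₊ with hkdef
  -- the random vector of scores
  set L : Ω → Fin (n + 1) → ℝ := fun ω i => s (X i ω) (Y i ω) with hLdef
  have hΛmeas : ∀ i : Fin (n + 1), Measurable fun ω => s (X i ω) (Y i ω) := fun i =>
    hs.comp ((hXmeas i).prodMk (hYmeas i))
  have hLmeas : Measurable L := measurable_pi_lambda _ hΛmeas
  -- exchangeability of the score vector
  have hLexch : ∀ σ : Equiv.Perm (Fin (n + 1)),
      Measure.map (fun ω => L ω ∘ σ) ℙ = Measure.map L ℙ := by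
    intro σ
    have hg : Measurable fun (v : Fin (n + 1) → 𝒳 × ℝ) (i : Fin (n + 1)) => s (v i).1 (v i).2 :=
      measurable_pi_lambda _ fun i => hs.comp (measurable_pi_apply i)
    have hV : Measurable fun ω (i : Fin (n + 1)) => (X i ω, Y i ω) :=
      measurable_pi_lambda _ fun i => (hXmeas i).prodMk (hYmeas i)
    have hVσ : Measurable fun ω (i : Fin (n + 1)) => (X (σ i) ω, Y (σ i) ω) :=
      measurable_pi_lambda _ fun i => (hXmeas _).prodMk (hYmeas _)
    calc Measure.map (fun ω => L ω ∘ σ) ℙ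
        = Measure.map ((fun (v : Fin (n + 1) → 𝒳 × ℝ) (i : Fin (n + 1)) => s (v i).1 (v i).2)
            ∘ fun ω i => (X (σ i) ω, Y (σ i) ω)) ℙ := by
          rw [hLdef]; rfl
      _ = Measure.map (fun (v : Fin (n + 1) → 𝒳 × ℝ) (i : Fin (n + 1)) => s (v i).1 (v i).2)
            (Measure.map (fun ω i => (X (σ i) ω, Y (σ i) ω)) ℙ) := (Measure.map_map hg hVσ).symm
      _ = Measure.map (fun (v : Fin (n + 1) → 𝒳 × ℝ) (i : Fin (n + 1)) => s (v i).1 (v i).2)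
            (Measure.map (fun ω i => (X i ω, Y i ω)) ℙ) := by rw [hexch σ]
      _ = Measure.map L ℙ := by rw [Measure.map_map hg hV, hLdef]; rfl
  -- equality of rank distributions
  have hrankeq : ∀ (j : Fin (n + 1)) (m : ℕ),
      ℙ {ω | rnk j (L ω) = m} = ℙ {ω | rnk (Fin.last n) (L ω) = m} := by
    intro j m
    set σ := Equiv.swap j (Fin.last n) with hσ
    have hB : MeasurableSet {v : Fin (n + 1) → ℝ | rnk j v = m} :=
      rnk_measurable j (measurableSet_singleton m)
    have hLσ : Measurable fun ω => L ω ∘ σ := measurable_pi_lambda _ fun i => hΛmeas (σ i)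
    have h1 : ℙ {ω | rnk j (L ω) = m} = Measure.map L ℙ {v | rnk j v = m} :=
      (Measure.map_apply hLmeas hB).symm
    have h2 : ℙ {ω | rnk j (L ω ∘ σ) = m} = Measure.map (fun ω => L ω ∘ σ) ℙ {v | rnk j v = m} :=
      (Measure.map_apply hLσ hB).symm
    have h3 : ∀ ω, rnk j (L ω ∘ σ) = rnk (Fin.last n) (L ω) := by
      intro ω
      rw [rnk_perm σ j (L ω), hσ, Equiv.swap_apply_left]
    rw [h1, ← hLexch σ, ← h2]
    congr 1
    ext ω
    simp [h3 ω]
  -- a good measurable set where scores are injective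
  obtain ⟨G, hGmeas, hGP, hGinj⟩ : ∃ G : Set Ω, MeasurableSet G ∧ ℙ G = 1 ∧
      ∀ ω ∈ G, Function.Injective fun i => s (X i ω) (Y i ω) := by
    set N := toMeasurable ℙ {ω | ¬ Function.Injective fun i => s (X i ω) (Y i ω)} with hN
    have hN0 : ℙ N = 0 := by
      rw [hN, measure_toMeasurable]
      exact ae_iff.mp hdistinct
    refine ⟨Nᶜ, (measurableSet_toMeasurable ℙ _).compl, ?_, ?_⟩
    · rw [measure_compl (measurableSet_toMeasurable _ _) (measure_ne_top _ _), hN0, measure_univ]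
      simp
    · intro ω hω
      by_contra h
      exact hω (subset_toMeasurable _ _ h)
  have hGc : ℙ Gᶜ = 0 := by
    have := measure_compl hGmeas (measure_ne_top ℙ G)
    rw [hGP, measure_univ] at this
    simpa using this
  -- each rank value has probability 1/(n+1)
  have hsum1 : ∀ m : ℕ, 1 ≤ m → m ≤ n + 1 →
      ℙ {ω | rnk (Fin.last n) (L ω) = m} = (((n:ℝ≥0∞) + 1))⁻¹ := by
    intro m hm1 hm2
    set E : Fin (n + 1) → Set Ω := fun j => {ω | rnk j (L ω) = m} ∩ G with hE
    have hEmeas : ∀ j, MeasurableSet (E j) := fun j =>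
      ((rnk_measurable j).comp hLmeas (measurableSet_singleton m)).inter hGmeas
    have hEdisj : (↑(Finset.univ : Finset (Fin (n + 1))) : Set (Fin (n + 1))).PairwiseDisjoint E := by
      intro j _ j' _ hjj'
      refine Set.disjoint_left.mpr ?_
      rintro ω ⟨hj, hωG⟩ ⟨hj', _⟩
      exact hjj' (rnk_inj (L ω) (hGinj ω hωG) (hj.trans hj'.symm))
    have hEunion : (⋃ j ∈ (Finset.univ : Finset (Fin (n + 1))), E j) = G := by
      apply Set.Subset.antisymm
      · intro ω hω
        simp only [Set.mem_iUnion] at hω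
        obtain ⟨j, _, _, hωG⟩ := hω
        exact hωG
      · intro ω hω
        obtain ⟨j, hj⟩ := rnk_surj (L ω) (hGinj ω hω) hm1 hm2
        simp only [Set.mem_iUnion]
        exact ⟨j, Finset.mem_univ j, hj, hω⟩
    have hcard := measure_biUnion_finset (μ := ℙ) hEdisj (fun j _ => hEmeas j)
    rw [hEunion, hGP] at hcard
    have hEj : ∀ j, ℙ (E j) = ℙ {ω | rnk (Fin.last n) (L ω) = m} := fun j =>
      (measure_inter_conull hGc).trans (hrankeq j m)
    rw [Finset.sum_congr rfl (fun j _ => hEj j), Finset.sum_const, Finset.card_univ,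
      Fintype.card_fin, nsmul_eq_mul] at hcard
    have hcne : ((n:ℝ≥0∞) + 1) ≠ 0 := by simp
    have hctop : ((n:ℝ≥0∞) + 1) ≠ ⊤ := by simp [ENNReal.add_ne_top]
    have hcast : ((n + 1 : ℕ) : ℝ≥0∞) = (n:ℝ≥0∞) + 1 := by push_cast; ring
    rw [hcast] at hcard
    calc ℙ {ω | rnk (Fin.last n) (L ω) = m}
        = ((n:ℝ≥0∞) + 1)⁻¹ * (((n:ℝ≥0∞) + 1) * ℙ {ω | rnk (Fin.last n) (L ω) = m}) := by
          rw [← mul_assoc, ENNReal.inv_mul_cancel hcne hctop, one_mul]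
      _ = ((n:ℝ≥0∞) + 1)⁻¹ := by rw [← hcard, mul_one]
  -- probability of rank ≤ k
  have hle : ℙ {ω | rnk (Fin.last n) (L ω) ≤ k} = (k : ℝ≥0∞) * ((n:ℝ≥0∞) + 1)⁻¹ := by
    have hsplit : {ω | rnk (Fin.last n) (L ω) ≤ k} =
        ⋃ m ∈ Finset.Icc 1 k, {ω | rnk (Fin.last n) (L ω) = m} := by
      ext ω
      simp only [Set.mem_setOf_eq, Set.mem_iUnion, Finset.mem_Icc, exists_prop]
      constructor
      · intro h
        exact ⟨rnk (Fin.last n) (L ω), ⟨rnk_ge_one _ _, h⟩, rfl⟩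
      · rintro ⟨m, ⟨_, hmk⟩, rfl⟩
        exact hmk
    have hdisj : (↑(Finset.Icc 1 k) : Set ℕ).PairwiseDisjoint
        fun m => {ω | rnk (Fin.last n) (L ω) = m} := by
      intro m1 _ m2 _ hne
      exact Set.disjoint_left.mpr fun ω h1 h2 => hne (h1.symm.trans h2)
    have hmeas : ∀ m ∈ Finset.Icc 1 k, MeasurableSet {ω | rnk (Fin.last n) (L ω) = m} :=
      fun m _ => (rnk_measurable _).comp hLmeas (measurableSet_singleton m)
    rw [hsplit, measure_biUnion_finset hdisj hmeas]
    have hconst : ∀ m ∈ Finset.Icc 1 k, ℙ {ω | rnk (Fin.last n) (L ω) = m} = ((n:ℝ≥0∞) + 1)⁻¹ := by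
      intro m hm
      rw [Finset.mem_Icc] at hm
      exact hsum1 m hm.1 (by omega)
    rw [Finset.sum_congr rfl hconst, Finset.sum_const, Nat.card_Icc, nsmul_eq_mul]
    norm_num
  -- the event in the statement equals the rank event a.e.
  have hae : {ω | (s (X (Fin.last n) ω) (Y (Fin.last n) ω) : EReal) ≤
        ((Multiset.map (fun i : Fin n => (s (X i.castSucc ω) (Y i.castSucc ω) : EReal))
            (Finset.univ : Finset (Fin n)).val).sort (· ≤ ·)).getD (k - 1) ⊤}
      =ᵐ[ℙ] {ω | rnk (Fin.last n) (L ω) ≤ k} := by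
    have hGae : ∀ᵐ ω ∂ℙ, ω ∈ G := by
      rw [ae_iff]
      exact hGc
    filter_upwards [hGae] with ω hω
    have := rank_le_iff hn (L ω) (hGinj ω hω) hk1 hkn
    simp only [hLdef] at this
    simp only [Set.mem_setOf_eq, eq_iff_iff]
    exact this
  have hP : ℙ {ω | (s (X (Fin.last n) ω) (Y (Fin.last n) ω) : EReal) ≤
        ((Multiset.map (fun i : Fin n => (s (X i.castSucc ω) (Y i.castSucc ω) : EReal))
            (Finset.univ : Finset (Fin n)).val).sort (· ≤ ·)).getD (k - 1) ⊤}
      = (k : ℝ≥0∞) * ((n:ℝ≥0∞) + 1)⁻¹ := (measure_congr hae).trans hle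
  have htr : (ℙ {ω | (s (X (Fin.last n) ω) (Y (Fin.last n) ω) : EReal) ≤
        ((Multiset.map (fun i : Fin n => (s (X i.castSucc ω) (Y i.castSucc ω) : EReal))
            (Finset.univ : Finset (Fin n)).val).sort (· ≤ ·)).getD (k - 1) ⊤}).toReal
      = (k : ℝ) / ((n:ℝ) + 1) := by
    have h1 : ((k : ℝ≥0∞)).toReal = (k : ℝ) := by simp
    have h2 : (((n:ℝ≥0∞) + 1)).toReal = (n:ℝ) + 1 := by
      rw [ENNReal.toReal_add (by simp) (by simp)]; simp
    rw [hP, ENNReal.toReal_mul, ENNReal.toReal_inv, h1, h2, div_eq_mul_inv]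
  rw [htr]
  have hceil_ge : (1 - α) * ((n:ℝ) + 1) ≤ (k : ℝ) := Nat.le_ceil _
  have hceil_lt : (k : ℝ) < (1 - α) * ((n:ℝ) + 1) + 1 :=
    Nat.ceil_lt_add_one (by positivity)
  constructor
  · rw [le_div_iff₀ hnk]
    exact hceil_ge
  · rw [div_le_iff₀ hnk]
    have : (1 - α + 1 / ((n:ℝ) + 1)) * ((n:ℝ) + 1) = (1 - α) * ((n:ℝ) + 1) + 1 := by
      field_simp
    rw [this]
    linarith
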